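/- Given a nonzero Gaussian integer s with |x| < |s| for some Gaussian integer x, there exists a unit v ∈ {±1, ±i} such that |s − v x| < |s|. -/

import Mathlib

noncomputable section
open scoped Classical
open Filter MeasureTheory

/-- `Z[i]⁺`: Gaussian integers with positive real part and nonnegative imaginary part
(one representative per associate class of nonzero elements). -/
def posRep (z : GaussianInt) : Prop := 0 < z.re ∧ 0 ≤ z.im

/-- The Gaussian Möbius function: `1` on units, `(-1)^k` on squarefree elements with `k`
prime factors, and `0` otherwise. -/
def muI (q : GaussianInt) : ℤ :=
  if IsUnit q then 1
  else if Squarefree q then (-1) ^ Multiset.card (UniqueFactorizationMonoid.factors q)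
  else 0

/-- The Gaussian Euler totient `φ_i(q) = |(Z[i]/qZ[i])ˣ|`. -/
def phiI (q : GaussianInt) : ℕ := Nat.card ((GaussianInt ⧸ Ideal.span {q})ˣ)

/-- The sum-of-two-squares counting function. -/
def r2 (n : ℕ) : ℕ := Nat.card {p : ℤ × ℤ // p.1 ^ 2 + p.2 ^ 2 = (n : ℤ)}

/-- The closed unit square in the first quadrant of `ℂ`. -/
def I2 : Set ℂ := {z : ℂ | 0 ≤ z.re ∧ z.re ≤ 1 ∧ 0 ≤ z.im ∧ z.im ≤ 1}

/-- The region inside the disc of radius `S` about `0` and outside at least one of the four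
discs of radius `S` centred at `±s`, `±is`. -/
def omegaReg (S : ℝ) (s : GaussianInt) : Set ℂ :=
  {z : ℂ | ‖z‖ ≤ S ∧
    ∃ u : GaussianInt, IsUnit u ∧ S < ‖z + GaussianInt.toComplex (u * s)‖}

/-! Since `N(s - y) = N s + N y - 2 Re (s ȳ)`, it suffices to make `Re (s · conj (v x))` exceed
`N x / 2`. For `w = s x̄` some unit `u` makes `Re (u w) = max (|Re w|, |Im w|) ≥ |w| / √2`, and
`|w| / √2 = |s| |x| / √2 > |x|² / 2`; then `v = ū` works. -/

theorem Zsqrtd.norm_sub {d : ℤ} (s y : ℤ√d) :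
    (s - y).norm = s.norm + y.norm - 2 * (s * star y).re := by
  simp only [Zsqrtd.norm_def, Zsqrtd.re_sub, Zsqrtd.im_sub, Zsqrtd.re_mul, Zsqrtd.re_star,
    Zsqrtd.im_star]
  ring

namespace GaussianInt

theorem exists_isUnit_norm_le_two_mul_sq_re (w : GaussianInt) :
    ∃ u : GaussianInt, IsUnit u ∧ 0 ≤ (u * w).re ∧ w.norm ≤ 2 * (u * w).re ^ 2 := by
  have hnorm : w.norm = w.re ^ 2 + w.im ^ 2 := by rw [Zsqrtd.norm_def]; ring
  have hi : IsUnit (⟨0, 1⟩ : GaussianInt) := .of_mul_eq_one ⟨0, -1⟩ (by decide)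
  have hi' : IsUnit (⟨0, -1⟩ : GaussianInt) := .of_mul_eq_one ⟨0, 1⟩ (by decide)
  have re_neg_one : ((-1 : GaussianInt) * w).re = -w.re := by simp
  have re_i : ((⟨0, 1⟩ : GaussianInt) * w).re = -w.im := by simp [Zsqrtd.re_mul]
  have re_neg_i : ((⟨0, -1⟩ : GaussianInt) * w).re = w.im := by simp [Zsqrtd.re_mul]
  rcases le_total (w.im ^ 2) (w.re ^ 2) with hre | him
  · rcases le_total 0 w.re with hpos | hneg
    · exact ⟨1, isUnit_one, by rwa [one_mul], by rw [one_mul]; linarith⟩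
    · exact ⟨-1, isUnit_one.neg, by rw [re_neg_one]; linarith,
        by rw [re_neg_one, neg_sq]; linarith⟩
  · rcases le_total 0 w.im with hpos | hneg
    · exact ⟨⟨0, -1⟩, hi', by rwa [re_neg_i], by rw [re_neg_i]; linarith⟩
    · exact ⟨⟨0, 1⟩, hi, by rw [re_i]; linarith, by rw [re_i, neg_sq]; linarith⟩

end GaussianInt

theorem exists_unit_rotation_general (s x : GaussianInt) (hx : x ≠ 0)
    (h : x.norm < s.norm) :
    ∃ v : GaussianInt, IsUnit v ∧ (s - v * x).norm < s.norm := by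
  obtain ⟨u, hu, hre, hsq⟩ := GaussianInt.exists_isUnit_norm_le_two_mul_sq_re (s * star x)
  refine ⟨star u, hu.star, ?_⟩
  have hrot : s * star (star u * x) = u * (s * star x) := by
    rw [star_mul, star_star]; ring
  have hux : (star u * x).norm = x.norm := by
    rw [Zsqrtd.norm_mul, Zsqrtd.norm_conj, (Zsqrtd.norm_eq_one_iff' (by norm_num) u).2 hu, one_mul]
  have hxpos : 0 < x.norm := GaussianInt.norm_pos.2 hx
  rw [Zsqrtd.norm_mul, Zsqrtd.norm_conj] at hsq
  have hsq_lt : x.norm ^ 2 < (2 * (u * (s * star x)).re) ^ 2 := by nlinarith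
  have hlt := lt_of_pow_lt_pow_left₀ 2 (by positivity) hsq_lt
  rw [Zsqrtd.norm_sub, hux, hrot]
  linarith

theorem exists_unit_rotation (s x : GaussianInt) (hs : s ≠ 0) (hx : x ≠ 0)
    (h : x.norm < s.norm) :
    ∃ v : GaussianInt, IsUnit v ∧ (s - v * x).norm < s.norm :=
  exists_unit_rotation_general s x hx h
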